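/- arXiv:2311.17440 — 7 statements merged into one kernel-verified Lean document; each statement's English description precedes it below -/
import Mathlib

section
/- Let p be a prime and s_1, ..., s_{l-1} fixed natural numbers with sum S, and let k satisfy p^k > S. Then the function f(n) = multinomial(n; s_1, ..., s_{l-1}, n - S) mod p (defined for n ≥ S) is periodic with period p^k, i.e., f(n + p^k) ≡ f(n) (mod p) for all n ≥ S. -/
open Finset

lemma multinomial_snoc_aux {l : ℕ} (s : Fin l → ℕ) (m : ℕ) :
    Nat.multinomial Finset.univ (Fin.snoc s m) =
      (m + ∑ i, s i).choose m * Nat.multinomial Finset.univ s := by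
  have hsum : ∑ i ∈ Finset.univ.map Fin.castSuccEmb, Fin.snoc s m i = ∑ i, s i := by
    rw [Finset.sum_map]
    exact Finset.sum_congr rfl fun x _ => by
      rw [Fin.coe_castSuccEmb, Fin.snoc_castSucc]
  have hmult : Nat.multinomial (Finset.univ.map Fin.castSuccEmb) (Fin.snoc s m) =
      Nat.multinomial Finset.univ s := by
    unfold Nat.multinomial
    rw [Finset.sum_map, Finset.prod_map]
    congr 1
    · congr 1
      exact Finset.sum_congr rfl fun x _ => by
        rw [Fin.coe_castSuccEmb, Fin.snoc_castSucc]
    · exact Finset.prod_congr rfl fun x _ => by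
        rw [Fin.coe_castSuccEmb, Fin.snoc_castSucc]
  rw [Fin.univ_castSuccEmb, Nat.multinomial_cons, Fin.snoc_last, hsum, hmult]

lemma choose_add_pow_modEq {p : ℕ} [Fact p.Prime] {k S : ℕ} (h : S < p ^ k) (n : ℕ) :
    (n + p ^ k).choose S ≡ n.choose S [MOD p] := by
  have hp : 0 < p := (Fact.out : p.Prime).pos
  have key : ∀ m : ℕ, Nat.choose m S ≡
      Nat.choose (m / p ^ k) (S / p ^ k) *
        ∏ i ∈ Finset.range k, Nat.choose (m / p ^ i % p) (S / p ^ i % p) [MOD p] := by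
    intro m
    rw [← Int.natCast_modEq_iff]
    exact_mod_cast Choose.choose_modEq_choose_mul_prod_range_choose (n := m) (k := S) (p := p) k
  have hS0 : S / p ^ k = 0 := Nat.div_eq_of_lt h
  have hdigits : ∀ i ∈ Finset.range k, (n + p ^ k) / p ^ i % p = n / p ^ i % p := by
    intro i hi
    rw [Finset.mem_range] at hi
    have hik : p ^ k = p ^ i * (p * p ^ (k - i - 1)) := by
      rw [← pow_succ']
      rw [← pow_add]
      congr 1
      omega
    rw [hik, Nat.add_mul_div_left _ _ (pow_pos hp i), Nat.add_mul_mod_self_left]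
  have h1 := key (n + p ^ k)
  have h2 := key n
  refine h1.trans (Nat.ModEq.trans ?_ h2.symm)
  rw [hS0, Nat.choose_zero_right, Nat.choose_zero_right, one_mul, one_mul]
  have : (∏ i ∈ Finset.range k, ((n + p ^ k) / p ^ i % p).choose (S / p ^ i % p)) =
      ∏ i ∈ Finset.range k, (n / p ^ i % p).choose (S / p ^ i % p) :=
    Finset.prod_congr rfl fun i hi => by rw [hdigits i hi]
  rw [this]

theorem multinomial_last_varying_periodic (p k l : ℕ) (hp : p.Prime)
    (s : Fin l → ℕ) (S : ℕ) (hS : S = ∑ i, s i) (hk : p ^ k > S) :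
    ∀ n : ℕ, S ≤ n →
      Nat.multinomial Finset.univ (Fin.snoc s ((n + p ^ k) - S)) ≡
        Nat.multinomial Finset.univ (Fin.snoc s (n - S)) [MOD p] := by
  intro n hn
  haveI : Fact p.Prime := ⟨hp⟩
  rw [multinomial_snoc_aux, multinomial_snoc_aux, ← hS]
  have e1 : n + p ^ k - S + S = n + p ^ k := by omega
  have e2 : n - S + S = n := by omega
  have c1 : (n + p ^ k - S + S).choose (n + p ^ k - S) = (n + p ^ k).choose S := by
    rw [e1, ← Nat.choose_symm (by omega : S ≤ n + p ^ k)]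
  have c2 : (n - S + S).choose (n - S) = n.choose S := by
    rw [e2, ← Nat.choose_symm hn]
  rw [c1, c2]
  exact (choose_add_pow_modEq hk n).mul_right _
end

section
/- If C and D are fully symmetric subsets of an F_p-labeled hypergraph G = (V, λ) and C ∩ D ≠ ∅, then C ∪ D is fully symmetric. -/
open Finset

/-- A subset `C` is fully symmetric in the `F_p`-labeled hypergraph `(V, lab)`
if edges of equal size agreeing outside `C` have equal labels. -/
def FullySymmetric {V : Type*} [DecidableEq V] {p : ℕ} (lab : Finset V → ZMod p)
    (C : Finset V) : Prop :=
  ∀ e₁ e₂ : Finset V, e₁.card = e₂.card → e₁ \ C = e₂ \ C → lab e₁ = lab e₂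

section Aux

variable {V : Type*} [DecidableEq V] {p : ℕ} {lab : Finset V → ZMod p}

lemma card_insert_erase {a b : V} {e : Finset V} (hae : a ∈ e) (hbe : b ∉ e) :
    (insert b (e.erase a)).card = e.card := by
  rw [card_insert_of_notMem (fun h => hbe (mem_of_mem_erase h)),
      card_erase_of_mem hae]
  have : 1 ≤ e.card := card_pos.mpr ⟨a, hae⟩
  omega

lemma sdiff_insert_erase {S : Finset V} {a b : V} (ha : a ∈ S) (hb : b ∈ S)
    (e : Finset V) : (insert b (e.erase a)) \ S = e \ S := by
  ext z
  simp only [mem_sdiff, mem_insert, mem_erase]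
  constructor
  · rintro ⟨rfl | ⟨hza, hz⟩, hzS⟩
    · exact absurd hb hzS
    · exact ⟨hz, hzS⟩
  · rintro ⟨hz, hzS⟩
    exact ⟨Or.inr ⟨fun h => hzS (h ▸ ha), hz⟩, hzS⟩

lemma swap_lab {S : Finset V} (hS : FullySymmetric lab S) {a b : V}
    (ha : a ∈ S) (hb : b ∈ S) {e : Finset V} (hae : a ∈ e) (hbe : b ∉ e) :
    lab e = lab (insert b (e.erase a)) :=
  hS _ _ (card_insert_erase hae hbe).symm (sdiff_insert_erase ha hb e).symm

lemma aux1 {x y : V} {e₁ e₂ : Finset V} (hy : y ∈ e₂) :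
    (insert y (e₁.erase x)) \ e₂ = (e₁ \ e₂).erase x := by
  ext z
  simp only [mem_sdiff, mem_insert, mem_erase]
  constructor
  · rintro ⟨rfl | ⟨hzx, hz1⟩, hz2⟩
    · exact absurd hy hz2
    · exact ⟨hzx, hz1, hz2⟩
  · rintro ⟨hzx, hz1, hz2⟩
    exact ⟨Or.inr ⟨hzx, hz1⟩, hz2⟩

lemma aux2 {v y : V} {e₁ e₂ : Finset V} (hy : y ∉ e₁) :
    e₁ \ (insert v (e₂.erase y)) = (e₁ \ e₂).erase v := by
  ext z
  simp only [mem_sdiff, mem_insert, mem_erase, not_or, not_and]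
  constructor
  · rintro ⟨hz1, hzv, h⟩
    have hzy : z ≠ y := fun h' => hy (h' ▸ hz1)
    exact ⟨hzv, hz1, fun hz2 => (h hzy hz2).elim⟩
  · rintro ⟨hzv, hz1, hz2⟩
    exact ⟨hz1, hzv, fun _ hz => hz2 hz⟩

lemma aux3 {v x y : V} {e₁ e₂ : Finset V} (hy2 : y ∈ e₂) (hy1 : y ∉ e₁)
    (hv1 : v ∈ e₁) (hv2 : v ∈ e₂) :
    (insert y (e₁.erase v)) \ (insert x (e₂.erase v)) = (e₁ \ e₂).erase x := by
  have hyv : y ≠ v := fun h => hy1 (h ▸ hv1)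
  ext z
  simp only [mem_sdiff, mem_insert, mem_erase, not_or, not_and]
  constructor
  · rintro ⟨rfl | ⟨hzv, hz1⟩, hzx, h⟩
    · exact absurd hy2 (fun h2 => (h hyv h2).elim)
    · exact ⟨hzx, hz1, fun hz2 => (h hzv hz2).elim⟩
  · rintro ⟨hzx, hz1, hz2⟩
    have hzv : z ≠ v := fun h => hz2 (h ▸ hv2)
    have hzy : z ≠ y := fun h => hy1 (h ▸ hz1)
    exact ⟨Or.inr ⟨hzv, hz1⟩, hzx, fun _ hz => hz2 hz⟩

lemma measure_le {x : V} {e₁ e₂ : Finset V} {n : ℕ} (hx : x ∈ e₁ \ e₂)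
    (hm : (e₁ \ e₂).card ≤ n + 1) : ((e₁ \ e₂).erase x).card ≤ n := by
  rw [card_erase_of_mem hx]
  have : 1 ≤ (e₁ \ e₂).card := card_pos.mpr ⟨x, hx⟩
  omega

/-- The mixed step: `x ∈ C \ D` must leave `e₁` and `y ∈ D \ C` must enter,
using the pivot `v ∈ C ∩ D`. -/
lemma step {C D : Finset V} (hC : FullySymmetric lab C) (hD : FullySymmetric lab D)
    {v : V} (hvC : v ∈ C) (hvD : v ∈ D) {n : ℕ}
    (IH : ∀ e₁ e₂ : Finset V, e₁.card = e₂.card → e₁ \ (C ∪ D) = e₂ \ (C ∪ D) →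
      (e₁ \ e₂).card ≤ n → lab e₁ = lab e₂)
    {e₁ e₂ : Finset V} (hc : e₁.card = e₂.card) (ho : e₁ \ (C ∪ D) = e₂ \ (C ∪ D))
    (hm : (e₁ \ e₂).card ≤ n + 1)
    {x y : V} (hx : x ∈ e₁ \ e₂) (hy : y ∈ e₂ \ e₁)
    (hxC : x ∈ C) (hyD : y ∈ D) (hyC : y ∉ C) :
    lab e₁ = lab e₂ := by
  obtain ⟨hx1, hx2⟩ := mem_sdiff.mp hx
  obtain ⟨hy2, hy1⟩ := mem_sdiff.mp hy
  have hxCD : x ∈ C ∪ D := mem_union_left _ hxC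
  have hyCD : y ∈ C ∪ D := mem_union_right _ hyD
  have hvCD : v ∈ C ∪ D := mem_union_left _ hvC
  have hvy : v ≠ y := fun h => hyC (h ▸ hvC)
  by_cases hv1 : v ∈ e₁
  · by_cases hv2 : v ∈ e₂
    · -- v in both : swap v→y in e₁ (D-move), swap v→x in e₂ (C-move)
      have h₁ : lab e₁ = lab (insert y (e₁.erase v)) := swap_lab hD hvD hyD hv1 hy1
      have h₂ : lab e₂ = lab (insert x (e₂.erase v)) := swap_lab hC hvC hxC hv2 hx2
      rw [h₁, h₂]
      apply IH
      · rw [card_insert_erase hv1 hy1, card_insert_erase hv2 hx2]; exact hc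
      · rw [sdiff_insert_erase hvCD hyCD, sdiff_insert_erase hvCD hxCD]; exact ho
      · rw [aux3 hy2 hy1 hv1 hv2]
        exact measure_le hx hm
    · -- v ∈ e₁ \ e₂ : swap y→v in e₂ (D-move)
      have h₂ : lab e₂ = lab (insert v (e₂.erase y)) := swap_lab hD hyD hvD hy2 hv2
      rw [h₂]
      apply IH
      · rw [card_insert_erase hy2 hv2]; exact hc
      · rw [sdiff_insert_erase hyCD hvCD]; exact ho
      · rw [aux2 hy1]
        exact measure_le (mem_sdiff.mpr ⟨hv1, hv2⟩) hm
  · -- v ∉ e₁ : swap x→v in e₁ (C-move)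
    have h₁ : lab e₁ = lab (insert v (e₁.erase x)) := swap_lab hC hxC hvC hx1 hv1
    by_cases hv2 : v ∈ e₂
    · rw [h₁]
      apply IH
      · rw [card_insert_erase hx1 hv1]; exact hc
      · rw [sdiff_insert_erase hxCD hvCD]; exact ho
      · rw [aux1 hv2]
        exact measure_le hx hm
    · -- then swap v→y in e₁' (D-move)
      have hv1' : v ∈ insert v (e₁.erase x) := mem_insert_self _ _
      have hy1' : y ∉ insert v (e₁.erase x) := by
        simp only [mem_insert, mem_erase]
        rintro (rfl | ⟨-, h⟩)
        · exact hvy rfl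
        · exact hy1 h
      have h₂ : lab (insert v (e₁.erase x)) =
          lab (insert y ((insert v (e₁.erase x)).erase v)) :=
        swap_lab hD hvD hyD hv1' hy1'
      have herase : (insert v (e₁.erase x)).erase v = e₁.erase x := by
        rw [erase_insert]
        simp only [mem_erase]
        rintro ⟨-, h⟩
        exact hv1 h
      rw [h₁, h₂, herase]
      apply IH
      · rw [card_insert_erase hx1 hy1]; exact hc
      · rw [sdiff_insert_erase hxCD hyCD]; exact ho
      · rw [aux1 hy2]
        exact measure_le hx hm

end Aux

theorem fullySymmetric_union {V : Type*} [Fintype V] [DecidableEq V]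
    {p : ℕ} [Fact p.Prime] (lab : Finset V → ZMod p) (C D : Finset V)
    (hC : FullySymmetric lab C) (hD : FullySymmetric lab D)
    (hCD : (C ∩ D).Nonempty) : FullySymmetric lab (C ∪ D) := by
  obtain ⟨v, hv⟩ := hCD
  rw [mem_inter] at hv
  obtain ⟨hvC, hvD⟩ := hv
  suffices h : ∀ n (e₁ e₂ : Finset V), e₁.card = e₂.card →
      e₁ \ (C ∪ D) = e₂ \ (C ∪ D) → (e₁ \ e₂).card ≤ n → lab e₁ = lab e₂ by
    intro e₁ e₂ hc ho
    exact h _ e₁ e₂ hc ho le_rfl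
  intro n
  induction n with
  | zero =>
    intro e₁ e₂ hc ho hm
    have hempty : e₁ \ e₂ = ∅ := card_eq_zero.mp (Nat.le_zero.mp hm)
    have hsub : e₁ ⊆ e₂ := sdiff_eq_empty_iff_subset.mp hempty
    rw [eq_of_subset_of_card_le hsub hc.ge]
  | succ n IH =>
    intro e₁ e₂ hc ho hm
    by_cases heq : e₁ = e₂
    · rw [heq]
    have hne : (e₁ \ e₂).Nonempty := by
      rw [sdiff_nonempty]
      intro hsub
      exact heq (eq_of_subset_of_card_le hsub hc.ge)
    obtain ⟨x, hx⟩ := hne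
    have hcard_comm : (e₂ \ e₁).card = (e₁ \ e₂).card := card_sdiff_comm hc.symm
    have hne' : (e₂ \ e₁).Nonempty := by
      rw [← card_pos, hcard_comm, card_pos]
      exact ⟨x, hx⟩
    obtain ⟨y, hy⟩ := hne'
    obtain ⟨hx1, hx2⟩ := mem_sdiff.mp hx
    obtain ⟨hy2, hy1⟩ := mem_sdiff.mp hy
    have hxCD : x ∈ C ∪ D := by
      by_contra h
      exact hx2 (mem_sdiff.mp (ho ▸ mem_sdiff.mpr ⟨hx1, h⟩)).1
    have hyCD : y ∈ C ∪ D := by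
      by_contra h
      exact hy1 (mem_sdiff.mp (ho.symm ▸ mem_sdiff.mpr ⟨hy2, h⟩)).1
    -- same-side swap helper
    have same_side : ∀ S : Finset V, FullySymmetric lab S → x ∈ S → y ∈ S →
        lab e₁ = lab e₂ := by
      intro S hS hxS hyS
      rw [swap_lab hS hxS hyS hx1 hy1]
      apply IH
      · rw [card_insert_erase hx1 hy1]; exact hc
      · rw [sdiff_insert_erase hxCD hyCD]; exact ho
      · rw [aux1 hy2]
        exact measure_le hx hm
    by_cases hxC : x ∈ C
    · by_cases hyC : y ∈ C
      · exact same_side C hC hxC hyC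
      · by_cases hxD : x ∈ D
        · exact same_side D hD hxD ((mem_union.mp hyCD).resolve_left hyC)
        · exact step hC hD hvC hvD IH hc ho hm hx hy hxC
            ((mem_union.mp hyCD).resolve_left hyC) hyC
    · have hxD : x ∈ D := (mem_union.mp hxCD).resolve_left hxC
      by_cases hyD : y ∈ D
      · exact same_side D hD hxD hyD
      · have hyC' : y ∈ C := (mem_union.mp hyCD).resolve_right hyD
        have hm' : (e₂ \ e₁).card ≤ n + 1 := by rw [hcard_comm]; exact hm
        exact (step hC hD hvC hvD IH hc.symm ho.symm hm' hy hx hyC' hxD hxC).symm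
end

section
/- If C and D are subsets of a finite set V with C ∩ D ≠ ∅, then the subgroup of Sym(V) generated by the pointwise stabilizer subgroups Sym(C) and Sym(D) (permutations supported on C, respectively D) contains Sym(C ∪ D) (all permutations supported on C ∪ D). -/
open Equiv Equiv.Perm

theorem swap_mem_closure_aux
    {V : Type*} [Fintype V] [DecidableEq V] (C D : Finset V)
    (hCD : (C ∩ D).Nonempty) (a b : V) (ha : a ∈ C ∪ D) (hb : b ∈ C ∪ D) :
    Equiv.swap a b ∈ Subgroup.closure {σ : Equiv.Perm V |
        (∀ v ∉ C, σ v = v) ∨ (∀ v ∉ D, σ v = v)} := by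
  set S := {σ : Equiv.Perm V | (∀ v ∉ C, σ v = v) ∨ (∀ v ∉ D, σ v = v)}
  obtain ⟨x, hx⟩ := hCD
  rw [Finset.mem_inter] at hx
  have swapC : ∀ u v : V, u ∈ C → v ∈ C → Equiv.swap u v ∈ Subgroup.closure S := by
    intro u v hu hv
    apply Subgroup.subset_closure
    left
    intro w hw
    exact Equiv.swap_apply_of_ne_of_ne (fun h => hw (h ▸ hu)) (fun h => hw (h ▸ hv))
  have swapD : ∀ u v : V, u ∈ D → v ∈ D → Equiv.swap u v ∈ Subgroup.closure S := by
    intro u v hu hv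
    apply Subgroup.subset_closure
    right
    intro w hw
    exact Equiv.swap_apply_of_ne_of_ne (fun h => hw (h ▸ hu)) (fun h => hw (h ▸ hv))
  have key : ∀ u v : V, u ∈ C → v ∈ D → Equiv.swap u v ∈ Subgroup.closure S := by
    intro u v hu hv
    by_cases huv : u = v
    · subst huv; exact swapC u u hu hu
    by_cases hux : u = x
    · subst hux; exact swapD u v hx.2 hv
    by_cases hvx : v = x
    · subst hvx; exact swapC u v hu hx.1
    have h1 : Equiv.swap u v =
        Equiv.swap u x * Equiv.swap x v * Equiv.swap u x := by
      have h2 := Equiv.swap_apply_apply (Equiv.swap u x) x v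
      rw [Equiv.swap_apply_right, Equiv.swap_apply_of_ne_of_ne (Ne.symm huv) hvx,
        Equiv.swap_inv] at h2
      exact h2
    rw [h1]
    exact mul_mem (mul_mem (swapC u x hu hx.1) (swapD x v hx.2 hv)) (swapC u x hu hx.1)
  rw [Finset.mem_union] at ha hb
  rcases ha with ha | ha <;> rcases hb with hb | hb
  · exact swapC a b ha hb
  · exact key a b ha hb
  · rw [Equiv.swap_comm]; exact key b a hb ha
  · exact swapD a b ha hb

theorem perm_union_mem_closure_of_inter_nonempty
    {V : Type*} [Fintype V] [DecidableEq V] (C D : Finset V)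
    (hCD : (C ∩ D).Nonempty) (π : Equiv.Perm V)
    (hπ : ∀ v ∉ C ∪ D, π v = v) :
    π ∈ Subgroup.closure {σ : Equiv.Perm V |
        (∀ v ∉ C, σ v = v) ∨ (∀ v ∉ D, σ v = v)} := by
  set S := {σ : Equiv.Perm V | (∀ v ∉ C, σ v = v) ∨ (∀ v ∉ D, σ v = v)}
  suffices h : ∀ n (π : Equiv.Perm V), π.support.card ≤ n →
      (∀ v ∉ C ∪ D, π v = v) → π ∈ Subgroup.closure S by
    exact h π.support.card π le_rfl hπ
  intro n
  induction n with
  | zero =>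
    intro π hc _
    have : π = 1 := by
      rw [← Equiv.Perm.card_support_eq_zero]; omega
    subst this; exact one_mem _
  | succ n ih =>
    intro π hc hπ
    by_cases h1 : π = 1
    · subst h1; exact one_mem _
    · obtain ⟨a, ha⟩ : ∃ a, π a ≠ a := by
        by_contra h
        push_neg at h
        exact h1 (Equiv.ext h)
      have haC : a ∈ C ∪ D := by
        by_contra h; exact ha (hπ a h)
      have hpaC : π a ∈ C ∪ D := by
        by_contra h
        have := hπ (π a) h
        exact ha (π.injective this)
      have hτ := swap_mem_closure_aux C D hCD a (π a) haC hpaC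
      have hsub : ∀ v ∉ C ∪ D, (Equiv.swap a (π a) * π) v = v := by
        intro v hv
        have hva : v ≠ a := fun h => hv (h ▸ haC)
        have hvpa : v ≠ π a := fun h => hv (h ▸ hpaC)
        simp [hπ v hv, Equiv.swap_apply_of_ne_of_ne hva hvpa]
      have hcard := Equiv.Perm.card_support_swap_mul ha
      have hmem := ih (Equiv.swap a (π a) * π) (by omega) hsub
      have : π = (Equiv.swap a (π a))⁻¹ * (Equiv.swap a (π a) * π) := by
        group
      rw [this]
      exact mul_mem (inv_mem hτ) hmem
end

section
/- Let Γ be a subgroup of Sym(n) whose action on {1,...,n} has all orbits of size strictly less than n - t, where t ≤ n/2. Then the index [Sym(n) : Γ] is at least (n choose t). -/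
open Nat Finset

/-- Moving a pair `(j, m-j)` towards the extremes increases the product of factorials. -/
lemma ize_fact_pair_mono (m i j : ℕ) (hij : i ≤ j) (hj : 2 * j ≤ m) :
    j ! * (m - j)! ≤ i ! * (m - i)! := by
  induction j, hij using Nat.le_induction with
  | base => exact le_refl _
  | succ j hj' ih =>
    have h2j : 2 * j ≤ m := by omega
    refine le_trans ?_ (ih h2j)
    have hmj : m - j = (m - (j + 1)) + 1 := by omega
    rw [hmj, Nat.factorial_succ (m - (j + 1)), Nat.factorial_succ j]
    have hle : j + 1 ≤ m - (j + 1) + 1 := by omega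
    calc (j + 1) * j ! * (m - (j + 1))!
        = (j + 1) * (j ! * (m - (j + 1))!) := by ring
      _ ≤ (m - (j + 1) + 1) * (j ! * (m - (j + 1))!) :=
          Nat.mul_le_mul_right _ hle
      _ = j ! * ((m - (j + 1) + 1) * (m - (j + 1))!) := by ring

lemma ize_fact_mul_fact_le (m k a : ℕ) (h1 : m - a ≤ k) (h2 : k ≤ a) (h3 : a ≤ m) :
    k ! * (m - k)! ≤ a ! * (m - a)! := by
  rcases le_or_gt (2 * k) m with h | h
  · have := ize_fact_pair_mono m (m - a) k h1 h
    rwa [Nat.sub_sub_self h3, mul_comm ((m - a)!)] at this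
  · have hk : k ≤ m := le_trans h2 h3
    have h1' : m - a ≤ m - k := by omega
    have h2' : 2 * (m - k) ≤ m := by omega
    have := ize_fact_pair_mono m (m - a) (m - k) h1' h2'
    rwa [Nat.sub_sub_self hk, Nat.sub_sub_self h3, mul_comm ((m - a)!),
      mul_comm ((m - k)!)] at this

lemma ize_prod_fact_le_fact_sum {α : Type*} (s : Finset α) (f : α → ℕ) :
    (∏ i ∈ s, (f i)!) ≤ (∑ i ∈ s, f i)! :=
  Nat.le_of_dvd (Nat.factorial_pos _) (Nat.prod_factorial_dvd_factorial_sum s f)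

/-- If every part is `≤ a` then the product of factorials is at most `a! * (sum - a)!`. -/
lemma ize_prod_fact_le {α : Type*} (s : Finset α) (f : α → ℕ) (a : ℕ)
    (hf : ∀ i ∈ s, f i ≤ a) :
    (∏ i ∈ s, (f i)!) ≤ a ! * ((∑ i ∈ s, f i) - a)! := by
  induction s using Finset.cons_induction with
  | empty => simpa using Nat.one_le_iff_ne_zero.mpr (Nat.factorial_ne_zero a)
  | cons i s hi ih =>
    rw [Finset.prod_cons, Finset.sum_cons]
    have hk : f i ≤ a := hf i (Finset.mem_cons_self i s)
    have ihs := ih (fun j hj => hf j (Finset.mem_cons_of_mem hj))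
    set k := f i with hkdef
    set S := ∑ j ∈ s, f j with hSdef
    rcases le_or_gt a S with hS | hS
    · calc k ! * ∏ j ∈ s, (f j)! ≤ k ! * (a ! * (S - a)!) :=
          Nat.mul_le_mul_left _ ihs
        _ = a ! * (k ! * (S - a)!) := by ring
        _ ≤ a ! * ((k + (S - a))!) := by
            exact Nat.mul_le_mul_left _ (Nat.le_of_dvd (Nat.factorial_pos _)
              (Nat.factorial_mul_factorial_dvd_factorial_add k (S - a)))
        _ = a ! * ((k + S) - a)! := by congr 2; omega
    · have hP : (∏ j ∈ s, (f j)!) ≤ S ! := ize_prod_fact_le_fact_sum s f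
      rcases le_or_gt (k + S) a with h2 | h2
      · calc k ! * ∏ j ∈ s, (f j)! ≤ k ! * S ! := Nat.mul_le_mul_left _ hP
          _ ≤ (k + S)! := Nat.le_of_dvd (Nat.factorial_pos _)
              (Nat.factorial_mul_factorial_dvd_factorial_add k S)
          _ ≤ a ! := Nat.factorial_le h2
          _ = a ! * ((k + S) - a)! := by
              rw [Nat.sub_eq_zero_of_le h2]; simp
      · have hB := ize_fact_mul_fact_le (k + S) k a (by omega) hk (by omega)
        rw [Nat.add_sub_cancel_left] at hB
        calc k ! * ∏ j ∈ s, (f j)! ≤ k ! * S ! := Nat.mul_le_mul_left _ hP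
          _ ≤ a ! * ((k + S) - a)! := hB

/-- Main combinatorial lemma: positive parts summing to `n`, each `< n - t`, with
`2t ≤ n`, have product of factorials at most `t! * (n-t)!`. -/
lemma ize_prod_fact_le_of_small {α : Type*} [DecidableEq α] (s : Finset α) (f : α → ℕ) (n t : ℕ)
    (hsum : ∑ i ∈ s, f i = n) (h2t : 2 * t ≤ n)
    (hpos : ∀ i ∈ s, 1 ≤ f i)
    (hf : ∀ i ∈ s, f i + t < n) :
    (∏ i ∈ s, (f i)!) ≤ t ! * (n - t)! := by
  rcases eq_or_lt_of_le h2t with he | hlt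
  · -- 2t = n : all parts are ≤ t - 1
    rcases s.eq_empty_or_nonempty with rfl | ⟨i₀, hi₀⟩
    · simp only [Finset.sum_empty] at hsum
      subst hsum
      have : t = 0 := by omega
      subst this
      simp
    · have hk1 : 1 ≤ f i₀ := hpos _ hi₀
      have hkt : f i₀ + t < n := hf _ hi₀
      have ht2 : 2 ≤ t := by omega
      rw [← Finset.mul_prod_erase s _ hi₀]
      have hsum' : ∑ j ∈ s.erase i₀, f j = n - f i₀ := by
        have := Finset.add_sum_erase s f hi₀
        omega
      have hrest := ize_prod_fact_le (s.erase i₀) f (t - 1)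
        (fun j hj => by
          have := hf j (Finset.mem_of_mem_erase hj); omega)
      rw [hsum'] at hrest
      have harith : (n - f i₀) - (t - 1) = t + 1 - f i₀ := by omega
      rw [harith] at hrest
      have hB := ize_fact_mul_fact_le (t + 1) (f i₀) t (by omega) (by omega) (by omega)
      have e1 : t + 1 - t = 1 := by omega
      rw [e1] at hB
      -- hB : (f i₀)! * (t + 1 - f i₀)! ≤ t ! * 1 !
      have hnt : n - t = t := by omega
      rw [hnt]
      calc (f i₀)! * ∏ j ∈ s.erase i₀, (f j)!
          ≤ (f i₀)! * ((t - 1)! * (t + 1 - f i₀)!) := Nat.mul_le_mul_left _ hrest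
        _ = (t - 1)! * ((f i₀)! * (t + 1 - f i₀)!) := by ring
        _ ≤ (t - 1)! * (t ! * 1!) := Nat.mul_le_mul_left _ hB
        _ = (t - 1)! * t ! := by simp
        _ ≤ t ! * t ! := Nat.mul_le_mul_right _ (Nat.factorial_le (by omega))
  · -- 2t < n
    have hA := ize_prod_fact_le s f (n - t - 1) (fun i hi => by
      have := hf i hi; omega)
    rw [hsum] at hA
    have harith : n - (n - t - 1) = t + 1 := by omega
    rw [harith] at hA
    refine hA.trans ?_
    have h1 : (t + 1)! = (t + 1) * t ! := Nat.factorial_succ t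
    have h2 : (n - t)! = (n - t) * (n - t - 1)! := by
      have : n - t = (n - t - 1) + 1 := by omega
      rw [this, Nat.factorial_succ]
      congr 1 <;> omega
    calc (n - t - 1)! * (t + 1)! = (t + 1) * ((n - t - 1)! * t !) := by rw [h1]; ring
      _ ≤ (n - t) * ((n - t - 1)! * t !) := Nat.mul_le_mul_right _ (by omega)
      _ = t ! * (n - t)! := by rw [h2]; ring

theorem index_ge_choose_of_small_orbits (n t : ℕ) (ht : 2 * t ≤ n)
    (Γ : Subgroup (Equiv.Perm (Fin n)))
    (horb : ∀ x : Fin n, (MulAction.orbit Γ x).ncard < n - t) :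
    Γ.index ≥ n.choose t := by
  classical
  set Q := MulAction.orbitRel.Quotient Γ (Fin n) with hQ
  letI : Fintype Q := Fintype.ofFinite Q
  set π : Fin n → Q := Quotient.mk'' with hπdef
  have hπ : ∀ (γ : Γ) (x : Fin n), π ((γ : Equiv.Perm (Fin n)) x) = π x := by
    intro γ x
    exact Quotient.sound' ((MulAction.orbitRel_apply).mpr ⟨γ, rfl⟩)
  -- the injection into the product of permutation groups of the fibers
  let F : Γ → ∀ q : Q, Equiv.Perm {x : Fin n // π x = q} := fun γ q =>
    Equiv.Perm.subtypePerm (γ : Equiv.Perm (Fin n))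
      (fun x => by rw [hπ γ x])
  have hFinj : Function.Injective F := by
    intro γ₁ γ₂ h
    have hx : ∀ x : Fin n, (γ₁ : Equiv.Perm (Fin n)) x = (γ₂ : Equiv.Perm (Fin n)) x := by
      intro x
      have := congrFun h (π x)
      have := congrArg (fun (e : Equiv.Perm {y : Fin n // π y = π x}) => (e ⟨x, rfl⟩ : _).1) this
      simpa [F, Equiv.Perm.subtypePerm] using this
    exact Subtype.ext (Equiv.ext hx)
  have hcard : Nat.card Γ ≤ ∏ q : Q, (Nat.card {x : Fin n // π x = q})! := by
    calc Nat.card Γ ≤ Nat.card (∀ q : Q, Equiv.Perm {x : Fin n // π x = q}) :=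
        Nat.card_le_card_of_injective F hFinj
      _ = ∏ q : Q, Nat.card (Equiv.Perm {x : Fin n // π x = q}) := Nat.card_pi
      _ = ∏ q : Q, (Nat.card {x : Fin n // π x = q})! := by
          refine Finset.prod_congr rfl fun q _ => ?_
          rw [Nat.card_eq_fintype_card, Nat.card_eq_fintype_card, Fintype.card_perm]
  -- identify fibers with orbits
  have hfiber : ∀ q : Q, Nat.card {x : Fin n // π x = q}
      = (MulAction.orbit Γ (Quotient.out q)).ncard := by
    intro q
    rw [← Nat.card_coe_set_eq]
    refine Nat.card_congr (Equiv.subtypeEquivRight fun x => ?_)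
    have hout : π (Quotient.out q) = q := Quotient.out_eq' q
    constructor
    · intro h
      exact Quotient.eq''.mp (h.trans hout.symm)
    · intro h
      exact (Quotient.sound' h).trans hout
  -- sizes
  have hsum : ∑ q : Q, Nat.card {x : Fin n // π x = q} = n := by
    have h1 : Fintype.card (Σ q : Q, {x : Fin n // π x = q}) = Fintype.card (Fin n) :=
      Fintype.card_congr (Equiv.sigmaFiberEquiv π)
    rw [Fintype.card_sigma, Fintype.card_fin] at h1
    have h2 : ∑ q : Q, Nat.card {x : Fin n // π x = q}
        = ∑ q : Q, Fintype.card {x : Fin n // π x = q} :=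
      Finset.sum_congr rfl fun q _ => Nat.card_eq_fintype_card
    rw [h2, h1]
  have hlt : ∀ q : Q, Nat.card {x : Fin n // π x = q} + t < n := by
    intro q
    have h1 := horb (Quotient.out q)
    have h2 := hfiber q
    omega
  have hpos : ∀ q : Q, 1 ≤ Nat.card {x : Fin n // π x = q} := by
    intro q
    have : Nonempty {x : Fin n // π x = q} := ⟨⟨Quotient.out q, Quotient.out_eq' q⟩⟩
    exact Nat.one_le_iff_ne_zero.mpr (Nat.card_ne_zero.mpr ⟨this, inferInstance⟩)
  have hΓ : Nat.card Γ ≤ t ! * (n - t)! := by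
    refine hcard.trans ?_
    exact ize_prod_fact_le_of_small Finset.univ _ n t hsum ht
      (fun q _ => hpos q) (fun q _ => hlt q)
  -- conclude
  have hidx : Γ.index * Nat.card Γ = n ! := by
    rw [Subgroup.index_mul_card, Nat.card_eq_fintype_card, Fintype.card_perm,
      Fintype.card_fin]
  have htn : t ≤ n := by omega
  have hch := Nat.choose_mul_factorial_mul_factorial htn
  have hKpos : 0 < t ! * (n - t)! := Nat.mul_pos (Nat.factorial_pos _) (Nat.factorial_pos _)
  have : n.choose t * (t ! * (n - t)!) ≤ Γ.index * (t ! * (n - t)!) := by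
    calc n.choose t * (t ! * (n - t)!) = n ! := by rw [← hch]; ring
      _ = Γ.index * Nat.card Γ := hidx.symm
      _ ≤ Γ.index * (t ! * (n - t)!) := Nat.mul_le_mul_left _ hΓ
  exact Nat.le_of_mul_le_mul_right this hKpos
end

section
/- Let m, r ≥ 2 be natural numbers and n = m·r. Then n! / ((m!)^r · r!) ≥ 2^{(m-1)(r-1)}. -/
/-- `(s+1)^m ≤ C((s+1)m, m)`. -/
lemma pow_le_choose_mul (s : ℕ) : ∀ m : ℕ, (s + 1) ^ m ≤ ((s + 1) * m).choose m := by
  intro m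
  induction m with
  | zero => simp
  | succ m ih =>
    have hN : (s + 1) * (m + 1) = ((s + 1) * m + s) + 1 := by ring
    have hkey := Nat.add_one_mul_choose_eq ((s + 1) * m + s) m
    -- hkey : ((s+1)m+s+1) * choose ((s+1)m+s) m = choose ((s+1)m+s+1) (m+1) * (m+1)
    have hmono : ((s + 1) * m).choose m ≤ ((s + 1) * m + s).choose m :=
      Nat.choose_le_choose m (Nat.le_add_right _ _)
    have h1 : (m + 1) * ((s + 1) * ((s + 1) * m).choose m)
        ≤ (m + 1) * (((s + 1) * (m + 1)).choose (m + 1)) := by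
      rw [hN]
      calc (m + 1) * ((s + 1) * ((s + 1) * m).choose m)
          ≤ (m + 1) * ((s + 1) * ((s + 1) * m + s).choose m) := by
            exact Nat.mul_le_mul_left _ (Nat.mul_le_mul_left _ hmono)
        _ = ((s + 1) * (m + 1)) * ((s + 1) * m + s).choose m := by ring
        _ = ((s + 1) * m + s + 1) * ((s + 1) * m + s).choose m := by rw [hN]
        _ = ((s + 1) * m + s + 1).choose (m + 1) * (m + 1) := by
            simpa [Nat.succ_eq_add_one] using hkey
        _ = (m + 1) * (((s + 1) * m + s + 1).choose (m + 1)) := by ring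
    have h2 : (s + 1) * ((s + 1) * m).choose m ≤ ((s + 1) * (m + 1)).choose (m + 1) :=
      Nat.le_of_mul_le_mul_left h1 (Nat.succ_pos m)
    calc (s + 1) ^ (m + 1) = (s + 1) * (s + 1) ^ m := by ring
      _ ≤ (s + 1) * ((s + 1) * m).choose m := Nat.mul_le_mul_left _ ih
      _ ≤ ((s + 1) * (m + 1)).choose (m + 1) := h2

lemma wreath_aux (m : ℕ) (hm : 2 ≤ m) :
    ∀ s : ℕ, 2 ^ ((m - 1) * s) * ((m.factorial) ^ (s + 1) * (s + 1).factorial)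
      ≤ (m * (s + 1)).factorial := by
  intro s
  induction s with
  | zero => simp
  | succ s ih =>
    have hm1 : 1 ≤ m := le_trans (by norm_num) hm
    -- factorial decomposition
    have hle : m ≤ m * (s + 2) := Nat.le_mul_of_pos_right m (by omega)
    have hfact := Nat.choose_mul_factorial_mul_factorial hle
    have hsub : m * (s + 2) - m = m * (s + 1) := by
      have : m * (s + 2) = m * (s + 1) + m := by ring
      omega
    rw [hsub] at hfact
    -- choose bound
    have hch : (s + 2) ^ m ≤ (m * (s + 2)).choose m := by
      have := pow_le_choose_mul (s + 1) m
      simpa [mul_comm] using this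
    have hch2 : 2 ^ (m - 1) * (s + 2) ≤ (m * (s + 2)).choose m := by
      refine le_trans ?_ hch
      calc 2 ^ (m - 1) * (s + 2) ≤ (s + 2) ^ (m - 1) * (s + 2) := by
            exact Nat.mul_le_mul_right _ (Nat.pow_le_pow_left (by omega) _)
        _ = (s + 2) ^ (m - 1 + 1) := by ring
        _ = (s + 2) ^ m := by congr 1; omega
    -- put it together
    have key : 2 ^ ((m - 1) * (s + 1)) * ((m.factorial) ^ (s + 2) * (s + 2).factorial)
        = (2 ^ (m - 1) * (s + 2)) * m.factorial
          * (2 ^ ((m - 1) * s) * ((m.factorial) ^ (s + 1) * (s + 1).factorial)) := by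
      have hexp : (m - 1) * (s + 1) = (m - 1) + (m - 1) * s := by ring
      rw [Nat.factorial_succ, hexp, pow_add]
      ring
    calc 2 ^ ((m - 1) * (s + 1)) * ((m.factorial) ^ (s + 2) * (s + 2).factorial)
        = (2 ^ (m - 1) * (s + 2)) * m.factorial
          * (2 ^ ((m - 1) * s) * ((m.factorial) ^ (s + 1) * (s + 1).factorial)) := key
      _ ≤ (m * (s + 2)).choose m * m.factorial * (m * (s + 1)).factorial :=
          Nat.mul_le_mul (Nat.mul_le_mul_right _ hch2) ih
      _ = (m * (s + 2)).factorial := hfact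

theorem wreath_index_bound (m r : ℕ) (hm : 2 ≤ m) (hr : 2 ≤ r) :
    2 ^ ((m - 1) * (r - 1)) * ((m.factorial) ^ r * r.factorial) ≤ (m * r).factorial := by
  obtain ⟨s, rfl⟩ : ∃ s, r = s + 1 := ⟨r - 1, by omega⟩
  simpa using wreath_aux m hm s
end

section
/- Let p ≠ q be primes, γ ∈ F_p \ {0}, and t ∈ F_p. Define b(y; t) = 1 if y = t and b(y; t) = 0 otherwise, viewed as an element of F_q. Then there exist coefficients β_{t,r} ∈ F_q (r ∈ F_p) such that for all x_1, ..., x_d ∈ {0,1} ⊆ F_p and all y ∈ F_p: b(γ·x_1⋯x_d + y; t) = b(y; t) + Σ_{r ∈ F_p} β_{t,r} Σ_{S ⊆ [d]} (−1)^{|S|} · b(γ·(Σ_{i∈S} x_i) + y; r), with all arithmetic of the outer sum in F_q. -/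
open Finset

/-- The `F_q`-valued indicator that `y = t` in `F_p`. -/
def bInd (p q : ℕ) [NeZero p] [NeZero q] (y t : ZMod p) : ZMod q :=
  if y = t then 1 else 0

section aux

variable (p q : ℕ) [Fact p.Prime] [Fact q.Prime]

/-- the shift operator -/
noncomputable def shiftT (γ : ZMod p) : Module.End (ZMod q) (ZMod p → ZMod q) where
  toFun f := fun y => f (y + γ)
  map_add' _ _ := rfl
  map_smul' _ _ := rfl

/-- the sum functional -/
noncomputable def sumF : (ZMod p → ZMod q) →ₗ[ZMod q] ZMod q where
  toFun f := ∑ y, f y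
  map_add' f g := by simp [Finset.sum_add_distrib]
  map_smul' c f := by simp [Finset.mul_sum]

lemma sumF_shift (γ : ZMod p) (f : ZMod p → ZMod q) :
    sumF p q (shiftT p q γ f) = sumF p q f := by
  simpa [sumF, shiftT] using Fintype.sum_equiv (Equiv.addRight γ) _ f (fun y => rfl)

lemma shiftT_pow (γ : ZMod p) (m : ℕ) (f : ZMod p → ZMod q) (y : ZMod p) :
    ((shiftT p q γ) ^ m) f y = f (y + m • γ) := by
  induction m generalizing f y with
  | zero => simp
  | succ n ih =>
    rw [pow_succ, Module.End.mul_apply, ih]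
    show f (y + n • γ + γ) = f (y + (n + 1) • γ)
    congr 1
    rw [succ_nsmul]
    ring

lemma shift_const (γ : ZMod p) (hγ : γ ≠ 0) (f : ZMod p → ZMod q)
    (hf : ∀ y, f (y + γ) = f y) (z : ZMod p) : f z = f 0 := by
  have key : ∀ n : ℕ, ∀ y, f (y + n • γ) = f y := by
    intro n
    induction n with
    | zero => simp
    | succ m ih =>
      intro y
      rw [succ_nsmul, ← add_assoc, hf, ih]
  have hz : ((z * γ⁻¹).val : ℕ) • γ = z := by
    rw [nsmul_eq_mul, ZMod.natCast_zmod_val]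
    field_simp
  calc f z = f (0 + (z * γ⁻¹).val • γ) := by rw [zero_add, hz]
    _ = f 0 := key _ 0

lemma p_ne_zero_in_q (hpq : p ≠ q) : (p : ZMod q) ≠ 0 := by
  rw [Ne, ZMod.natCast_eq_zero_iff]
  intro hdvd
  have := (Nat.prime_dvd_prime_iff_eq (Fact.out : q.Prime) (Fact.out : p.Prime)).mp hdvd
  exact hpq this.symm

end aux

theorem symmetric_degree_decreasing_lemma (p q d : ℕ)
    [Fact p.Prime] [Fact q.Prime] (hpq : p ≠ q)
    (γ : ZMod p) (hγ : γ ≠ 0) (t : ZMod p) :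
    ∃ β : ZMod p → ZMod q,
      ∀ x : Fin d → ZMod p, (∀ i, x i = 0 ∨ x i = 1) → ∀ y : ZMod p,
        bInd p q (γ * ∏ i, x i + y) t =
          bInd p q y t +
            ∑ r : ZMod p, β r *
              ∑ S : Finset (Fin d),
                (-1 : ZMod q) ^ S.card * bInd p q (γ * ∑ i ∈ S, x i + y) r := by
  classical
  set T := shiftT p q γ with hT
  set A : Module.End (ZMod q) (ZMod p → ZMod q) := 1 - T with hA
  set W := LinearMap.ker (sumF p q) with hW
  -- A maps everything into W
  have hAW : ∀ f, A f ∈ W := by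
    intro f
    simp only [hW, LinearMap.mem_ker, hA, LinearMap.sub_apply, Module.End.one_apply, map_sub]
    rw [show T = shiftT p q γ from rfl, sumF_shift, sub_self]
  -- A is injective on W
  have hAinj : ∀ f ∈ W, A f = 0 → f = 0 := by
    intro f hf hAf
    have hper : ∀ y, f (y + γ) = f y := by
      intro y
      have := congrFun hAf y
      simp only [hA, LinearMap.sub_apply, Module.End.one_apply, Pi.zero_apply,
        Pi.sub_apply] at this
      have : f y - T f y = 0 := this
      simp only [hT, shiftT, LinearMap.coe_mk, AddHom.coe_mk] at this
      exact (sub_eq_zero.mp this).symm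
  -- const
    have hconst : ∀ z, f z = f 0 := shift_const p q γ hγ f hper
    have hsum : (p : ZMod q) * f 0 = 0 := by
      have : sumF p q f = 0 := hf
      simp only [sumF, LinearMap.coe_mk, AddHom.coe_mk] at this
      calc (p : ZMod q) * f 0 = ∑ _y : ZMod p, f 0 := by
            rw [Finset.sum_const, Finset.card_univ, ZMod.card, nsmul_eq_mul]
        _ = ∑ y : ZMod p, f y := by exact Finset.sum_congr rfl fun y _ => (hconst y).symm
        _ = 0 := this
    have hf0 : f 0 = 0 := by
      rcases mul_eq_zero.mp hsum with h | h
      · exact absurd h (p_ne_zero_in_q p q hpq)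
      · exact h
    funext z
    rw [hconst z, hf0]; rfl
  -- restricted map and surjectivity
  have hmapsTo : ∀ f ∈ W, A f ∈ W := fun f _ => hAW f
  let AW : W →ₗ[ZMod q] W := A.restrict hmapsTo
  have hAWinj : Function.Injective AW := by
    rw [injective_iff_map_eq_zero]
    intro ⟨f, hf⟩ h
    have : A f = 0 := congrArg Subtype.val h
    exact Subtype.ext (hAinj f hf this)
  have hAWsurj : Function.Surjective AW :=
    (LinearMap.injective_iff_surjective).mp hAWinj
  -- iterate: for any g ∈ W there is f ∈ W with A^n f = g
  have hiter : ∀ n : ℕ, ∀ g ∈ W, ∃ f ∈ W, (A ^ n) f = g := by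
    intro n
    induction n with
    | zero => intro g hg; exact ⟨g, hg, by simp⟩
    | succ m ih =>
      intro g hg
      obtain ⟨h0, hh0⟩ := hAWsurj ⟨g, hg⟩
      have hAh0 : A h0.1 = g := congrArg Subtype.val hh0
      obtain ⟨f, hfW, hfe⟩ := ih h0.1 h0.2
      refine ⟨f, hfW, ?_⟩
      rw [pow_succ', Module.End.mul_apply, hfe, hAh0]
  -- the target function
  set g : ZMod p → ZMod q := fun y => bInd p q (y + γ) t - bInd p q y t with hg
  have hgW : g ∈ W := by
    simp only [hW, LinearMap.mem_ker, sumF, LinearMap.coe_mk, AddHom.coe_mk, hg]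
    rw [Finset.sum_sub_distrib]
    have := Fintype.sum_equiv (Equiv.addRight γ) (fun z => bInd p q (z + γ) t)
      (fun z => bInd p q z t) (fun z => rfl)
    rw [this, sub_self]
  obtain ⟨β, hβW, hβ⟩ := hiter d g hgW
  refine ⟨β, ?_⟩
  intro x hx y
  -- key evaluation: (A^d β) y as alternating binomial sum
  have hbin : ∀ z : ZMod p, (A ^ d) β z
      = ∑ m ∈ Finset.range (d + 1), (-1 : ZMod q) ^ m * (d.choose m : ZMod q) * β (z + m • γ) := by
    intro z
    have hc : Commute (-T) (1 : Module.End (ZMod q) (ZMod p → ZMod q)) := Commute.one_right _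
    have expand : A ^ d = ∑ m ∈ Finset.range (d + 1),
        (-T) ^ m * 1 ^ (d - m) * (d.choose m : Module.End (ZMod q) (ZMod p → ZMod q)) := by
      rw [hA, sub_eq_neg_add]
      exact hc.add_pow d
    rw [expand, LinearMap.sum_apply, Finset.sum_apply]
    refine Finset.sum_congr rfl fun m _ => ?_
    rw [one_pow, mul_one, Module.End.mul_apply]
    have hnat : ((d.choose m : Module.End (ZMod q) (ZMod p → ZMod q))) β
        = (d.choose m : ZMod q) • β := by
      simp [Module.End.natCast_apply, Nat.cast_smul_eq_nsmul]
    rw [hnat]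
    have hneg : (-T) ^ m = (-1 : ZMod q) ^ m • T ^ m := by
      rw [← neg_one_smul (ZMod q) T, smul_pow]
    rw [hneg]
    simp only [LinearMap.smul_apply, Pi.smul_apply, smul_eq_mul]
    rw [shiftT_pow]
    simp only [Pi.smul_apply, smul_eq_mul]
    ring
  -- computing the inner alternating sums
  by_cases hall : ∀ i, x i = 1
  · -- all ones case
    have hprod : (∏ i, x i) = 1 := by
      rw [Finset.prod_congr rfl fun i _ => hall i, Finset.prod_const_one]
    have hsumS : ∀ S : Finset (Fin d), (∑ i ∈ S, x i) = (S.card : ZMod p) := by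
      intro S
      rw [Finset.sum_congr rfl fun i _ => hall i, Finset.sum_const, nsmul_eq_mul, mul_one]
    have hinner : ∀ r : ZMod p,
        (∑ S : Finset (Fin d), (-1 : ZMod q) ^ S.card * bInd p q (γ * ∑ i ∈ S, x i + y) r)
        = ∑ m ∈ Finset.range (d + 1),
            (d.choose m) • ((-1 : ZMod q) ^ m * bInd p q (γ * m + y) r) := by
      intro r
      have h1 : (∑ S : Finset (Fin d), (-1 : ZMod q) ^ S.card * bInd p q (γ * ∑ i ∈ S, x i + y) r)
          = ∑ S ∈ (Finset.univ : Finset (Fin d)).powerset,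
              (-1 : ZMod q) ^ S.card * bInd p q (γ * S.card + y) r := by
        rw [Finset.powerset_univ]
        exact Finset.sum_congr rfl fun S _ => by rw [hsumS]
      rw [h1, Finset.sum_powerset_apply_card
        (fun k => (-1 : ZMod q) ^ k * bInd p q (γ * k + y) r)]
      simp [Finset.card_univ]
    -- rewrite RHS
    have hswap : (∑ r : ZMod p, β r *
          ∑ S : Finset (Fin d), (-1 : ZMod q) ^ S.card * bInd p q (γ * ∑ i ∈ S, x i + y) r)
        = ∑ m ∈ Finset.range (d + 1),
            (-1 : ZMod q) ^ m * (d.choose m : ZMod q) * β (y + m • γ) := by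
      calc (∑ r : ZMod p, β r *
          ∑ S : Finset (Fin d), (-1 : ZMod q) ^ S.card * bInd p q (γ * ∑ i ∈ S, x i + y) r)
          = ∑ r : ZMod p, β r * ∑ m ∈ Finset.range (d + 1),
            (d.choose m) • ((-1 : ZMod q) ^ m * bInd p q (γ * m + y) r) := by
            exact Finset.sum_congr rfl fun r _ => by rw [hinner r]
        _ = ∑ r : ZMod p, ∑ m ∈ Finset.range (d + 1),
            β r * ((d.choose m) • ((-1 : ZMod q) ^ m * bInd p q (γ * m + y) r)) :=
            Finset.sum_congr rfl fun r _ => Finset.mul_sum _ _ _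
        _ = ∑ m ∈ Finset.range (d + 1), ∑ r : ZMod p,
            β r * ((d.choose m) • ((-1 : ZMod q) ^ m * bInd p q (γ * m + y) r)) :=
            Finset.sum_comm
        _ = ∑ m ∈ Finset.range (d + 1),
            (-1 : ZMod q) ^ m * (d.choose m : ZMod q) * β (y + m • γ) := by
            refine Finset.sum_congr rfl fun m _ => ?_
            have hpick : ∑ r : ZMod p, β r * bInd p q (γ * m + y) r = β (γ * m + y) := by
              simp [bInd, mul_ite, mul_one, mul_zero, Finset.sum_ite_eq]
            have : ∑ r : ZMod p, β r * ((d.choose m) • ((-1 : ZMod q) ^ m * bInd p q (γ * m + y) r))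
                = (d.choose m : ZMod q) * (-1 : ZMod q) ^ m * β (γ * m + y) := by
              rw [← hpick, Finset.mul_sum]
              refine Finset.sum_congr rfl fun r _ => ?_
              rw [nsmul_eq_mul]; ring
            rw [this]
            have : γ * (m : ZMod p) + y = y + m • γ := by
              rw [nsmul_eq_mul]; ring
            rw [this]; ring
    rw [hswap, ← hbin y, hβ]
    simp only [hg, hprod, mul_one]
    rw [add_comm γ y]
    ring
  · -- some zero case
    push_neg at hall
    obtain ⟨i0, hi0⟩ := hall
    have hx0 : x i0 = 0 := by rcases hx i0 with h | h; exact h; exact absurd h hi0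
    have hprod : (∏ i, x i) = 0 := Finset.prod_eq_zero (Finset.mem_univ i0) hx0
    have hinner : ∀ r : ZMod p,
        (∑ S : Finset (Fin d), (-1 : ZMod q) ^ S.card * bInd p q (γ * ∑ i ∈ S, x i + y) r) = 0 := by
      intro r
      refine Finset.sum_ninvolution
        (fun S => if i0 ∈ S then S.erase i0 else insert i0 S) ?_ ?_ (fun _ => Finset.mem_univ _) ?_
      · intro S
        by_cases h : i0 ∈ S
        · simp only [h, if_true]
          have hcard : (S.erase i0).card + 1 = S.card := Finset.card_erase_add_one h
          have hsum : (∑ i ∈ S.erase i0, x i) = ∑ i ∈ S, x i := by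
            rw [← Finset.add_sum_erase S x h, hx0, zero_add]
          rw [hsum, ← hcard, pow_succ]
          ring
        · simp only [h, if_false]
          have hcard : (insert i0 S).card = S.card + 1 := Finset.card_insert_of_notMem h
          have hsum : (∑ i ∈ insert i0 S, x i) = ∑ i ∈ S, x i := by
            rw [Finset.sum_insert h, hx0, zero_add]
          rw [hsum, hcard, pow_succ]
          ring
      · intro S _
        by_cases h : i0 ∈ S
        · simp only [h, if_true]
          intro he
          exact absurd (he ▸ Finset.notMem_erase i0 S) (fun hc => hc h)
        · simp only [h, if_false]
          intro he
          exact h (he ▸ Finset.mem_insert_self i0 S)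
      · intro S
        by_cases h : i0 ∈ S
        · simp [h, Finset.notMem_erase, Finset.insert_erase h]
        · simp [h, Finset.erase_insert h]
    simp only [hprod, mul_zero, zero_add]
    rw [Finset.sum_congr rfl fun r _ => by rw [hinner r, mul_zero]]
    simp
end

section
/- Let p be a prime and d = q^k where q ≠ p is prime, with d ≡ 1 (mod p). Let γ ∈ F_p \ {0}, t ∈ F_p. Then for all x_1,...,x_d ∈ {0,1} and y ∈ F_p, working in F_q: b(γ·x_1⋯x_d + y; t) = b(y; t) + Σ_{r ∈ F_p, r ≠ t} Σ_{S ⊆ [d]} (−1)^{|S|} b(γ·(Σ_{i∈S} x_i) + y; r). -/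
open Finset

lemma neg_one_pow_prime_pow (q k : ℕ) [Fact q.Prime] :
    ((-1 : ZMod q)) ^ (q ^ k) = -1 := by
  induction k with
  | zero => simp
  | succ n ih => rw [pow_succ, pow_mul, ih, ZMod.pow_card]

lemma bInd_sum (p q : ℕ) [Fact p.Prime] [NeZero q] (z : ZMod p) :
    ∑ r : ZMod p, bInd p q z r = 1 := by
  simp [bInd, Finset.sum_ite_eq]

lemma bInd_sum_erase (p q : ℕ) [Fact p.Prime] [NeZero q] (z t : ZMod p) :
    ∑ r ∈ Finset.univ.erase t, bInd p q z r = 1 - bInd p q z t := by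
  have h := Finset.add_sum_erase Finset.univ (bInd p q z) (Finset.mem_univ t)
  rw [bInd_sum] at h
  linear_combination h

theorem symmetric_degree_decreasing_special (p q d k : ℕ)
    [Fact p.Prime] [Fact q.Prime] (hpq : p ≠ q) (hd : d = q ^ k)
    (hd1 : (d : ZMod p) = 1) (γ : ZMod p) (hγ : γ ≠ 0) (t : ZMod p) :
    ∀ x : Fin d → ZMod p, (∀ i, x i = 0 ∨ x i = 1) → ∀ y : ZMod p,
      bInd p q (γ * ∏ i, x i + y) t =
        bInd p q y t +
          ∑ r ∈ Finset.univ.erase t,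
            ∑ S : Finset (Fin d),
              (-1 : ZMod q) ^ S.card * bInd p q (γ * ∑ i ∈ S, x i + y) r := by
  intro x hx y
  by_cases hall : ∀ i, x i = 1
  · -- all ones case
    have hprod : ∏ i, x i = 1 := Finset.prod_eq_one fun i _ => hall i
    have hsum : ∀ S : Finset (Fin d), (∑ i ∈ S, x i) = (S.card : ZMod p) := by
      intro S
      rw [Finset.sum_congr rfl (fun i _ => hall i), Finset.sum_const, nsmul_eq_mul, mul_one]
    have hdpos : 0 < d := by rw [hd]; exact pow_pos (Nat.Prime.pos Fact.out) k
    have hinner : ∀ r : ZMod p,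
        (∑ S : Finset (Fin d), (-1 : ZMod q) ^ S.card * bInd p q (γ * ∑ i ∈ S, x i + y) r)
          = bInd p q y r - bInd p q (γ + y) r := by
      intro r
      have h1 : (∑ S : Finset (Fin d), (-1 : ZMod q) ^ S.card *
          bInd p q (γ * ∑ i ∈ S, x i + y) r)
          = ∑ S ∈ (Finset.univ : Finset (Fin d)).powerset,
              (-1 : ZMod q) ^ S.card * bInd p q (γ * (S.card : ZMod p) + y) r := by
        rw [Finset.powerset_univ]
        exact Finset.sum_congr rfl fun S _ => by rw [hsum S]
      rw [h1, Finset.sum_powerset_apply_card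
        (f := fun m => (-1 : ZMod q) ^ m * bInd p q (γ * (m : ZMod p) + y) r)]
      have hcard : (Finset.univ : Finset (Fin d)).card = d := by simp
      rw [hcard, Finset.sum_range_succ]
      have hz : ∀ m ∈ Finset.range d, m ≠ 0 →
          (d.choose m) • ((-1 : ZMod q) ^ m * bInd p q (γ * (m : ZMod p) + y) r) = 0 := by
        intro m hm hm0
        have hmd : m ≠ d := (Finset.mem_range.mp hm).ne
        have : (q : ℕ) ∣ d.choose m := by
          rw [hd] at hmd ⊢
          exact Nat.Prime.dvd_choose_pow (Fact.out) hm0 hmd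
        rw [nsmul_eq_mul]
        have : ((d.choose m : ℕ) : ZMod q) = 0 := (ZMod.natCast_eq_zero_iff _ _).mpr this
        rw [this, zero_mul]
      rw [Finset.sum_eq_single_of_mem 0 (Finset.mem_range.mpr hdpos) hz]
      rw [Nat.choose_self, Nat.choose_zero_right, one_smul, one_smul, hd,
        neg_one_pow_prime_pow, ← hd, hd1]
      norm_num
      ring
    rw [hprod, mul_one]
    rw [Finset.sum_congr rfl fun r _ => hinner r, Finset.sum_sub_distrib,
      bInd_sum_erase, bInd_sum_erase]
    ring
  · -- some zero case
    push_neg at hall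
    obtain ⟨i₀, hi₀⟩ := hall
    have hxi₀ : x i₀ = 0 := (hx i₀).resolve_right hi₀
    have hprod : ∏ i, x i = 0 := Finset.prod_eq_zero (Finset.mem_univ i₀) hxi₀
    have hinner : ∀ r : ZMod p,
        (∑ S : Finset (Fin d), (-1 : ZMod q) ^ S.card * bInd p q (γ * ∑ i ∈ S, x i + y) r)
          = 0 := by
      intro r
      set f : Finset (Fin d) → ZMod q :=
        fun S => (-1 : ZMod q) ^ S.card * bInd p q (γ * ∑ i ∈ S, x i + y) r with hf
      have huniv : (Finset.univ : Finset (Fin d)) = insert i₀ (Finset.univ.erase i₀) := by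
        rw [Finset.insert_erase (Finset.mem_univ i₀)]
      have hni : i₀ ∉ Finset.univ.erase i₀ := Finset.notMem_erase _ _
      calc (∑ S : Finset (Fin d), f S)
          = ∑ S ∈ (Finset.univ : Finset (Fin d)).powerset, f S := by
            rw [Finset.powerset_univ]
        _ = ∑ S ∈ (insert i₀ (Finset.univ.erase i₀)).powerset, f S := by rw [← huniv]
        _ = (∑ S ∈ (Finset.univ.erase i₀).powerset, f S) +
              ∑ S ∈ (Finset.univ.erase i₀).powerset, f (insert i₀ S) :=
            Finset.sum_powerset_insert hni f
        _ = ∑ S ∈ (Finset.univ.erase i₀).powerset, (f S + f (insert i₀ S)) :=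
            (Finset.sum_add_distrib).symm
        _ = 0 := by
            apply Finset.sum_eq_zero
            intro S hS
            have hiS : i₀ ∉ S := fun h =>
              hni (Finset.mem_powerset.mp hS h)
            have hc : (insert i₀ S).card = S.card + 1 :=
              Finset.card_insert_of_notMem hiS
            have hs : ∑ i ∈ insert i₀ S, x i = ∑ i ∈ S, x i := by
              rw [Finset.sum_insert hiS, hxi₀, zero_add]
            rw [hf]
            simp only [hc, hs, pow_succ]
            ring
    rw [hprod, mul_zero, zero_add,
      Finset.sum_congr rfl fun r _ => hinner r, Finset.sum_const_zero, add_zero]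
end
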